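/- Let A be a finite alphabet, p_data a probability mass function on A, and p_1, ..., p_K probability mass functions on A that are strictly positive at every symbol. For any weights α = (α_1, ..., α_K) with each α_k ∈ [0,1] and ∑_{k=1}^K α_k = 1, the weighted product of experts π_α(a) = (∏_{k=1}^K p_k(a)^{α_k}) / Z(α), Z(α) = ∑_{a' ∈ A} ∏_{k=1}^K p_k(a')^{α_k}, satisfies H(p_data, π_α) ≤ ∑_{k=1}^K α_k · H(p_data, p_k), where H(p, q) = −∑_{a ∈ A} p(a) · log q(a). In particular, the cross-entropy of the weighted product of experts is at most the corresponding weighted average of the experts' cross-entropies. -/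
import Mathlib

/-- Cross-entropy between two probability mass functions on a finite alphabet. -/
noncomputable def crossEntropy {A : Type*} [Fintype A] (p q : A → ℝ) : ℝ :=
  -∑ a, p a * Real.log (q a)

/-- Weighted product of experts: normalized weighted geometric mean of the experts. -/
noncomputable def wpoe {A : Type*} [Fintype A] {K : ℕ}
    (p : Fin K → A → ℝ) (α : Fin K → ℝ) (a : A) : ℝ :=
  (∏ k, (p k a) ^ (α k)) / ∑ a', ∏ k, (p k a') ^ (α k)

/-- The cross-entropy of the weighted product of experts is at most the
weighted average of the experts' cross-entropies. -/
theorem stmt4 {A : Type*} [Fintype A] {K : ℕ}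
    (pdata : A → ℝ) (hpd0 : ∀ a, 0 ≤ pdata a) (hpd1 : ∑ a, pdata a = 1)
    (p : Fin K → A → ℝ) (hp0 : ∀ k a, 0 < p k a) (hp1 : ∀ k, ∑ a, p k a = 1)
    (α : Fin K → ℝ) (hα : ∀ k, α k ∈ Set.Icc (0 : ℝ) 1) (hα1 : ∑ k, α k = 1) :
    crossEntropy pdata (wpoe p α) ≤ ∑ k, α k * crossEntropy pdata (p k) := by
  have hAne : Nonempty A := by
    by_contra h
    simp [not_nonempty_iff.mp h] at hpd1
  set Z : ℝ := ∑ a', ∏ k, (p k a') ^ (α k) with hZ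
  have hprodpos : ∀ a, 0 < ∏ k, (p k a) ^ (α k) := by
    intro a
    exact Finset.prod_pos fun k _ => Real.rpow_pos_of_pos (hp0 k a) _
  have hZpos : 0 < Z := Finset.sum_pos (fun a _ => hprodpos a) Finset.univ_nonempty
  have hZle1 : Z ≤ 1 := by
    have h : ∀ a, ∏ k, (p k a) ^ (α k) ≤ ∑ k, α k * p k a := fun a =>
      Real.geom_mean_le_arith_mean_weighted _ _ _ (fun k _ => (hα k).1) hα1
        (fun k _ => (hp0 k a).le)
    calc Z ≤ ∑ a, ∑ k, α k * p k a := Finset.sum_le_sum fun a _ => h a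
      _ = ∑ k, α k * ∑ a, p k a := by rw [Finset.sum_comm]; simp [Finset.mul_sum]
      _ = 1 := by simp [hp1, hα1]
  have hlogZ : Real.log Z ≤ 0 := Real.log_nonpos hZpos.le hZle1
  have hlog : ∀ a, Real.log (wpoe p α a) = (∑ k, α k * Real.log (p k a)) - Real.log Z := by
    intro a
    rw [wpoe, Real.log_div (hprodpos a).ne' hZpos.ne', Real.log_prod]
    · congr 1
      refine Finset.sum_congr rfl fun k _ => ?_
      rw [Real.log_rpow (hp0 k a), mul_comm]
    · exact fun k _ => (Real.rpow_pos_of_pos (hp0 k a) _).ne'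
  have key : crossEntropy pdata (wpoe p α)
      = (∑ k, α k * crossEntropy pdata (p k)) + Real.log Z := by
    have h2 : ∑ a, pdata a * ∑ k, α k * Real.log (p k a)
        = ∑ k, α k * ∑ a, pdata a * Real.log (p k a) := by
      simp_rw [Finset.mul_sum]
      rw [Finset.sum_comm]
      exact Finset.sum_congr rfl fun k _ => Finset.sum_congr rfl fun a _ => by ring
    simp only [crossEntropy, hlog, mul_sub, Finset.sum_sub_distrib, ← Finset.sum_mul, hpd1,
      one_mul, h2, mul_neg, neg_sub, Finset.sum_neg_distrib]
    ring
  linarith
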